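/- In the setting of a 1-block quasi-group Markov shift, with a fixed element e ∈ A, left inverses a⁻, and a section S : H → A, define Σ^H = {Y : ℤ → Set A | ∀ i, Y i ∈ H and Y (i+1) ⊆ ⋃_{a ∈ Y i} F(a)} and define Φ : Σ → (ℤ → Set A) × (ℤ → A) by Φ(x) = (fun i => h(x i), fun i => S(h(x i))⁻ ∙ (x i)). Then Φ is injective, its image is exactly {(Y, z) | Y ∈ Σ^H and ∀ i, z i ∈ h(e)}, and Φ commutes with the shift maps: Φ(σ x) = (σ (Φ x).1, σ (Φ x).2) for all x ∈ Σ. Hence Σ can be identified with the product of the Markov shift Σ^H with the full shift on h(e). -/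
import Mathlib


/-- The follower set of a letter with respect to a transition relation. -/
def followerSet {A : Type*} (T : A → A → Prop) (a : A) : Set A := {b | T a b}

/-- The predecessor set of a letter with respect to a transition relation. -/
def predecessorSet {A : Type*} (T : A → A → Prop) (a : A) : Set A := {b | T b a}

/-- The class of a letter: all letters with the same follower set and the same
predecessor set. -/
def cls {A : Type*} (T : A → A → Prop) (a : A) : Set A :=
  {b | followerSet T b = followerSet T a ∧ predecessorSet T b = predecessorSet T a}

lemma mem_cls_self {A : Type*} (T : A → A → Prop) (a : A) : a ∈ cls T a := ⟨rfl, rfl⟩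

lemma cls_eq_of_mem {A : Type*} {T : A → A → Prop} {a b : A} (h : a ∈ cls T b) :
    cls T a = cls T b := by
  obtain ⟨hF, hP⟩ := h
  ext c
  simp only [cls, Set.mem_setOf_eq, hF, hP]

lemma master {A : Type*} [Fintype A] (op : A → A → A)
    (hrc : ∀ a b c : A, op b a = op c a → b = c)
    (T : A → A → Prop)
    (hcompat : ∀ a a' b b' : A, T a b → T a' b' → T (op a a') (op b b'))
    (a b v : A) (hv : T b v) :
    followerSet T (op a b) = (fun u => op u v) '' followerSet T a := by
  classical
  set Fs : A → Finset A := fun c => Finset.univ.filter (fun d => T c d) with hFs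
  have hmem : ∀ c d, d ∈ Fs c ↔ T c d := by intro c d; simp [hFs]
  have hinj : Function.Injective (fun u => op u v) := fun u u' h => hrc v u u' h
  have hsub : ∀ c, (Fs c).image (fun u => op u v) ⊆ Fs (op c b) := by
    intro c d hd
    rcases Finset.mem_image.mp hd with ⟨u, hu, rfl⟩
    exact (hmem _ _).mpr (hcompat c b u v ((hmem _ _).mp hu) hv)
  have hle : ∀ c, (Fs c).card ≤ (Fs (op c b)).card := by
    intro c
    calc (Fs c).card = ((Fs c).image (fun u => op u v)).card :=
          (Finset.card_image_of_injective _ hinj).symm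
      _ ≤ _ := Finset.card_le_card (hsub c)
  have hbij : Function.Bijective (fun c : A => op c b) :=
    Finite.injective_iff_bijective.mp (fun c c' h => hrc b c c' h)
  have hsum : ∑ c, (Fs (op c b)).card = ∑ c, (Fs c).card :=
    Fintype.sum_bijective _ hbij _ _ (fun c => rfl)
  have heqcard : ∀ c, (Fs c).card = (Fs (op c b)).card := by
    by_contra h
    push_neg at h
    rcases h with ⟨c₀, hc₀⟩
    have hlt : ∑ c, (Fs c).card < ∑ c, (Fs (op c b)).card :=
      Finset.sum_lt_sum (fun c _ => hle c)
        ⟨c₀, Finset.mem_univ _, lt_of_le_of_ne (hle c₀) hc₀⟩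
    omega
  have himg : (Fs a).image (fun u => op u v) = Fs (op a b) := by
    apply Finset.eq_of_subset_of_card_le (hsub a)
    rw [Finset.card_image_of_injective _ hinj]
    exact (heqcard a).ge
  ext d
  constructor
  · intro hd
    have hd' : d ∈ Fs (op a b) := (hmem _ _).mpr hd
    rw [← himg] at hd'
    rcases Finset.mem_image.mp hd' with ⟨u, hu, rfl⟩
    exact ⟨u, (hmem _ _).mp hu, rfl⟩
  · rintro ⟨u, hu, rfl⟩
    exact hcompat a b u v hu hv


lemma pred_as_follower {A : Type*} (T : A → A → Prop) (a : A) :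
    predecessorSet T a = followerSet (fun x y => T y x) a := rfl

lemma masterP {A : Type*} [Fintype A] (op : A → A → A)
    (hright : ∀ a b c : A, op b a = op c a → b = c)
    (T : A → A → Prop)
    (hcompat : ∀ a a' b b' : A, T a b → T a' b' → T (op a a') (op b b'))
    (a b v : A) (hv : T v b) :
    predecessorSet T (op a b) = (fun u => op u v) '' predecessorSet T a := by
  have := master op hright (fun x y => T y x)
    (fun a a' b b' h h' => hcompat b b' a a' h h') a b v hv
  simpa [pred_as_follower] using this

lemma masterF' {A : Type*} [Fintype A] (op : A → A → A)
    (hleft : ∀ a b c : A, op a b = op a c → b = c)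
    (T : A → A → Prop)
    (hcompat : ∀ a a' b b' : A, T a b → T a' b' → T (op a a') (op b b'))
    (a b u : A) (hu : T a u) :
    followerSet T (op a b) = (fun v => op u v) '' followerSet T b := by
  have := master (fun x y => op y x) (fun a b c h => hleft a b c h) T
    (fun a a' b b' h h' => hcompat a' a b' b h' h) b a u hu
  simpa using this

lemma masterP' {A : Type*} [Fintype A] (op : A → A → A)
    (hleft : ∀ a b c : A, op a b = op a c → b = c)
    (T : A → A → Prop)
    (hcompat : ∀ a a' b b' : A, T a b → T a' b' → T (op a a') (op b b'))
    (a b u : A) (hu : T u a) :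
    predecessorSet T (op a b) = (fun v => op u v) '' predecessorSet T b := by
  have := master (fun x y => op y x) (fun a b c h => hleft a b c h)
    (fun x y => T y x)
    (fun a a' b b' h h' => hcompat b' b a' a h' h) b a u hu
  simpa [pred_as_follower] using this

lemma cls_op_congr {A : Type*} [Fintype A] (op : A → A → A)
    (hright : ∀ a b c : A, op b a = op c a → b = c)
    (T : A → A → Prop)
    (hsucc : ∀ a : A, ∃ b, T a b)
    (hpred : ∀ a : A, ∃ c, T c a)
    (hcompat : ∀ a a' b b' : A, T a b → T a' b' → T (op a a') (op b b'))
    {a a' b b' : A} (ha : a' ∈ cls T a) (hb : b' ∈ cls T b) :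
    op a' b' ∈ cls T (op a b) := by
  obtain ⟨haF, haP⟩ := ha
  obtain ⟨hbF, hbP⟩ := hb
  obtain ⟨v, hv⟩ := hsucc b
  obtain ⟨w, hw⟩ := hpred b
  have hv' : T b' v := by
    have : v ∈ followerSet T b' := hbF ▸ hv
    exact this
  have hw' : T w b' := by
    have : w ∈ predecessorSet T b' := hbP ▸ hw
    exact this
  constructor
  · rw [master op hright T hcompat a' b' v hv',
      master op hright T hcompat a b v hv, haF]
  · rw [masterP op hright T hcompat a' b' w hw',
      masterP op hright T hcompat a b w hw, haP]

lemma cls_cancel {A : Type*} [Fintype A] (op : A → A → A)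
    (hleft : ∀ a b c : A, op a b = op a c → b = c)
    (T : A → A → Prop)
    (hsucc : ∀ a : A, ∃ b, T a b)
    (hpred : ∀ a : A, ∃ c, T c a)
    (hcompat : ∀ a a' b b' : A, T a b → T a' b' → T (op a a') (op b b'))
    {c a b : A} (h : cls T (op c a) = cls T (op c b)) :
    cls T a = cls T b := by
  obtain ⟨u, hu⟩ := hsucc c
  obtain ⟨w, hw⟩ := hpred c
  have hmem : op c a ∈ cls T (op c b) := h ▸ mem_cls_self T (op c a)
  obtain ⟨hF, hP⟩ := hmem
  have hFinj : Function.Injective fun v => op u v := fun x y hxy => hleft u x y hxy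
  have hPinj : Function.Injective fun v => op w v := fun x y hxy => hleft w x y hxy
  have hFa : followerSet T a = followerSet T b := by
    have h1 := masterF' op hleft T hcompat c a u hu
    have h2 := masterF' op hleft T hcompat c b u hu
    rw [h1, h2] at hF
    exact Set.image_injective.mpr hFinj hF
  have hPa : predecessorSet T a = predecessorSet T b := by
    have h1 := masterP' op hleft T hcompat c a w hw
    have h2 := masterP' op hleft T hcompat c b w hw
    rw [h1, h2] at hP
    exact Set.image_injective.mpr hPinj hP
  ext d
  simp only [cls, Set.mem_setOf_eq, hFa, hPa]

lemma exists_div {A : Type*} [Fintype A] (op : A → A → A)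
    (hleft : ∀ a b c : A, op a b = op a c → b = c)
    (a t : A) : ∃ w, op a w = t :=
  (Finite.injective_iff_surjective.mp (fun b c h => hleft a b c h)) t

theorem statement14 {A : Type*} [Fintype A] [Nonempty A]
    (op : A → A → A)
    (hleft : ∀ a b c : A, op a b = op a c → b = c)
    (hright : ∀ a b c : A, op b a = op c a → b = c)
    (T : A → A → Prop)
    (hsucc : ∀ a : A, ∃ b, T a b)
    (hpred : ∀ a : A, ∃ c, T c a)
    (hcompat : ∀ a a' b b' : A, T a b → T a' b' → T (op a a') (op b b'))
    (e : A) (inv : A → A) (hinv : ∀ a : A, op (inv a) a = e)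
    (S : Set A → A)
    (hS : ∀ C ∈ {C : Set A | ∃ a : A, C = cls T a}, S C ∈ C) :
    Set.InjOn
      (fun x : ℤ → A =>
        (((fun i => cls T (x i)), (fun i => op (inv (S (cls T (x i)))) (x i))) :
          (ℤ → Set A) × (ℤ → A)))
      {x : ℤ → A | ∀ i : ℤ, T (x i) (x (i + 1))} ∧
    (fun x : ℤ → A =>
        (((fun i => cls T (x i)), (fun i => op (inv (S (cls T (x i)))) (x i))) :
          (ℤ → Set A) × (ℤ → A))) ''
        {x : ℤ → A | ∀ i : ℤ, T (x i) (x (i + 1))} =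
      {p : (ℤ → Set A) × (ℤ → A) |
        (∀ i : ℤ, (∃ a : A, p.1 i = cls T a) ∧
          p.1 (i + 1) ⊆ ⋃ a ∈ p.1 i, followerSet T a) ∧
        (∀ i : ℤ, p.2 i ∈ cls T e)} ∧
    (∀ x ∈ {x : ℤ → A | ∀ i : ℤ, T (x i) (x (i + 1))},
      (fun x : ℤ → A =>
        (((fun i => cls T (x i)), (fun i => op (inv (S (cls T (x i)))) (x i))) :
          (ℤ → Set A) × (ℤ → A))) (fun i => x (i + 1)) =
        ((fun i => cls T (x (i + 1))), (fun i => op (inv (S (cls T (x (i + 1))))) (x (i + 1))))) := by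
  refine ⟨?_, ?_, ?_⟩
  · -- Injectivity
    intro x hx y hy hxy
    simp only [Prod.mk.injEq] at hxy
    obtain ⟨h1, h2⟩ := hxy
    funext i
    have hc : cls T (x i) = cls T (y i) := congrFun h1 i
    have hz : op (inv (S (cls T (x i)))) (x i) = op (inv (S (cls T (y i)))) (y i) :=
      congrFun h2 i
    rw [hc] at hz
    exact hleft _ _ _ hz
  · -- Image characterization
    ext p
    constructor
    · rintro ⟨x, hx, rfl⟩
      refine ⟨fun i => ⟨⟨x i, rfl⟩, ?_⟩, fun i => ?_⟩
      · -- cls T (x (i+1)) ⊆ ⋃ a ∈ cls T (x i), F a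
        intro b hb
        refine Set.mem_biUnion (mem_cls_self T (x i)) ?_
        have hPb : predecessorSet T b = predecessorSet T (x (i + 1)) := hb.2
        have : x i ∈ predecessorSet T (x (i + 1)) := hx i
        rw [← hPb] at this
        exact this
      · -- op (inv (S (cls T (x i)))) (x i) ∈ cls T e
        have hSmem : S (cls T (x i)) ∈ cls T (x i) := hS _ ⟨x i, rfl⟩
        have hxi : x i ∈ cls T (S (cls T (x i))) := by
          rw [cls_eq_of_mem hSmem]; exact mem_cls_self T (x i)
        have := cls_op_congr op hright T hsucc hpred hcompat
          (mem_cls_self T (inv (S (cls T (x i))))) hxi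
        rw [hinv] at this
        exact this
    · rintro ⟨hY, hz⟩
      obtain ⟨Y, z⟩ := p
      simp only at hY hz ⊢
      -- choose representatives and build x
      choose a ha using fun i => (hY i).1
      have hSY : ∀ i, S (Y i) ∈ Y i := fun i => hS _ ⟨a i, ha i⟩
      choose x hxdef using fun i =>
        exists_div op hleft (inv (S (Y i))) (z i)
      have hclsx : ∀ i, cls T (x i) = Y i := by
        intro i
        have h1 : cls T (op (inv (S (Y i))) (x i)) =
            cls T (op (inv (S (Y i))) (S (Y i))) := by
          rw [hxdef i, hinv, cls_eq_of_mem (hz i)]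
        have h2 := cls_cancel op hleft T hsucc hpred hcompat h1
        have h3 : S (Y i) ∈ cls T (a i) := by rw [← ha i]; exact hSY i
        rw [h2, cls_eq_of_mem h3, ← ha i]
      have hxSig : ∀ i : ℤ, T (x i) (x (i + 1)) := by
        intro i
        have hmem : x (i + 1) ∈ Y (i + 1) := by
          rw [← hclsx (i + 1)]; exact mem_cls_self T (x (i + 1))
        have := (hY i).2 hmem
        rcases Set.mem_iUnion₂.mp this with ⟨c, hc, hfc⟩
        rw [← hclsx i] at hc
        have hFc : followerSet T c = followerSet T (x i) := hc.1
        rw [hFc] at hfc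
        exact hfc
      refine ⟨x, hxSig, ?_⟩
      refine Prod.ext ?_ ?_
      · funext i; exact hclsx i
      · funext i
        simp only
        rw [hclsx i]
        exact hxdef i
  · intro x _
    rfl
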